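/- arXiv:alg-geom/9307001 — 2 statements merged into one kernel-verified Lean document; each statement's English description precedes it below -/
import Mathlib

section
/- Let N be an odd natural number and let Q ⊆ {1, ..., N} with |Q| > N/2. Let r_1, ..., r_N be natural numbers with ∑_j r_j + |Q| ≤ N - 2. Then the sum over all sign vectors n = (n_1, ..., n_N) ∈ {−1, +1}^N with ∑_j n_j > 0 of the quantity (∏_{j=1}^N n_j^{r_j + 1}) · ∏_{k ∈ Q} (n_k + 1) minus the analogous sum over sign vectors with ∑_j n_j < 0 equals zero. -/
/-!
Every summand contains the factor `∏ k ∈ Q, (n k + 1)`, so only sign vectors with `n k = +1` on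
`Q` contribute; since `|Q| > N / 2`, each of them has positive sum, so the sum over `∑ n < 0`
vanishes and the sum over `∑ n > 0` is the sum over all sign vectors. That full sum factors over
the coordinates, and the bound on `∑ r + |Q|` leaves a coordinate `j ∉ Q` with `r j` even, whose
factor is `1 ^ (r j + 1) + (-1) ^ (r j + 1) = 0`.
-/

open Finset

lemma sum_filter_pos_sub_sum_filter_neg {α β R : Type*} [LinearOrder β] [Zero β] [AddCommGroup R]
    (s : Finset α) (g : α → β) (w : α → R) (h : ∀ a ∈ s, w a ≠ 0 → 0 < g a) :
    ∑ a ∈ s with 0 < g a, w a - ∑ a ∈ s with g a < 0, w a = ∑ a ∈ s, w a := by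
  have hneg : ∑ a ∈ s with g a < 0, w a = 0 :=
    sum_eq_zero fun a ha => by
      rw [mem_filter] at ha
      by_contra hw
      exact lt_asymm ha.2 (h a ha.1 hw)
  rw [hneg, sub_zero, sum_filter_of_ne h]

lemma forall_mem_of_prod_sign_add_one_ne_zero {ι : Type*} {Q : Finset ι} {n : ι → Bool}
    (h : ∏ k ∈ Q, ((if n k then (1 : ℤ) else -1) + 1) ≠ 0) : ∀ k ∈ Q, n k := by
  intro k hk
  by_contra hnk
  exact h (prod_eq_zero hk (by simp [hnk]))

section SignVectors

variable {ι : Type*} [Fintype ι]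

lemma sum_sign_eq (n : ι → Bool) :
    ∑ j, (if n j then (1 : ℤ) else -1) = 2 * #{j | n j} - Fintype.card ι := by
  have hsign : ∀ j, (if n j then (1 : ℤ) else -1) = 2 * (if n j then 1 else 0) - 1 := by
    intro j
    cases n j <;> rfl
  simp only [hsign, sum_sub_distrib, ← mul_sum, sum_boole, sum_const, card_univ, nsmul_one]

lemma sum_sign_pos_of_forall_mem {Q : Finset ι} (hQ : Fintype.card ι < 2 * #Q) {n : ι → Bool}
    (hn : ∀ k ∈ Q, n k) : 0 < ∑ j, (if n j then (1 : ℤ) else -1) := by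
  have hle : #Q ≤ #{j | n j} := card_le_card fun k hk => by simpa using hn k hk
  rw [sum_sign_eq]
  omega

lemma exists_notMem_even_of_sum_add_card_lt (Q : Finset ι) (r : ι → ℕ)
    (h : ∑ j, r j + #Q < Fintype.card ι) : ∃ j ∉ Q, Even (r j) := by
  classical
  by_contra! hodd
  have hpos : #Qᶜ ≤ ∑ j ∈ Qᶜ, r j := by
    simpa using card_nsmul_le_sum Qᶜ r 1 fun j hj =>
      (Nat.not_even_iff_odd.1 (hodd j (mem_compl.1 hj))).pos
  have hsub : ∑ j ∈ Qᶜ, r j ≤ ∑ j, r j := sum_le_sum_of_subset (subset_univ _)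
  have hcard : #Qᶜ + #Q = Fintype.card ι := card_compl_add_card Q
  omega

lemma sum_prod_mul_prod_eq_zero [DecidableEq ι] {κ R : Type*} [Fintype κ] [CommSemiring R]
    (f g : ι → κ → R) (Q : Finset ι) {j₀ : ι} (hj₀ : j₀ ∉ Q) (hf : ∑ b, f j₀ b = 0) :
    ∑ n : ι → κ, (∏ j, f j (n j)) * ∏ k ∈ Q, g k (n k) = 0 := by
  have hprod : ∀ n : ι → κ, (∏ j, f j (n j)) * ∏ k ∈ Q, g k (n k)
      = ∏ j, f j (n j) * (if j ∈ Q then g j (n j) else 1) := by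
    intro n
    rw [prod_mul_distrib, prod_ite_mem, univ_inter]
  rw [sum_congr rfl fun n _ => hprod n,
    ← Fintype.prod_sum fun j b => f j b * if j ∈ Q then g j b else 1]
  exact prod_eq_zero (mem_univ j₀) (by simpa [hj₀] using hf)

end SignVectors

theorem sign_vector_sum_vanishes_general (N : ℕ)
    (Q : Finset (Fin N)) (hQ : N < 2 * Q.card)
    (r : Fin N → ℕ) (hr : (∑ j, r j) + Q.card ≤ N - 2) :
    (∑ n ∈ Finset.univ.filter
        (fun n : Fin N → Bool => 0 < ∑ j, (if n j then (1 : ℤ) else -1)),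
        (∏ j, (if n j then (1 : ℤ) else -1) ^ (r j + 1)) *
          ∏ k ∈ Q, ((if n k then (1 : ℤ) else -1) + 1))
    - (∑ n ∈ Finset.univ.filter
        (fun n : Fin N → Bool => (∑ j, (if n j then (1 : ℤ) else -1)) < 0),
        (∏ j, (if n j then (1 : ℤ) else -1) ^ (r j + 1)) *
          ∏ k ∈ Q, ((if n k then (1 : ℤ) else -1) + 1)) = 0 := by
  have hcard : Fintype.card (Fin N) < 2 * #Q := by rwa [Fintype.card_fin]
  rw [sum_filter_pos_sub_sum_filter_neg _ _ _ fun n _ hn => sum_sign_pos_of_forall_mem hcard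
    (forall_mem_of_prod_sign_add_one_ne_zero (right_ne_zero_of_mul hn))]
  obtain ⟨j₀, hj₀, heven⟩ :=
    exists_notMem_even_of_sum_add_card_lt Q r (by rw [Fintype.card_fin]; omega)
  refine sum_prod_mul_prod_eq_zero (fun j (b : Bool) => (if b then (1 : ℤ) else -1) ^ (r j + 1))
    (fun _ (b : Bool) => (if b then (1 : ℤ) else -1) + 1) Q hj₀ ?_
  simp [heven.add_one.neg_one_pow]

theorem sign_vector_sum_vanishes (N : ℕ) (hN : Odd N)
    (Q : Finset (Fin N)) (hQ : N < 2 * Q.card)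
    (r : Fin N → ℕ) (hr : (∑ j, r j) + Q.card ≤ N - 2) :
    (∑ n ∈ Finset.univ.filter
        (fun n : Fin N → Bool => 0 < ∑ j, (if n j then (1 : ℤ) else -1)),
        (∏ j, (if n j then (1 : ℤ) else -1) ^ (r j + 1)) *
          ∏ k ∈ Q, ((if n k then (1 : ℤ) else -1) + 1))
    - (∑ n ∈ Finset.univ.filter
        (fun n : Fin N → Bool => (∑ j, (if n j then (1 : ℤ) else -1)) < 0),
        (∏ j, (if n j then (1 : ℤ) else -1) ^ (r j + 1)) *
          ∏ k ∈ Q, ((if n k then (1 : ℤ) else -1) + 1)) = 0 :=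
  sign_vector_sum_vanishes_general N Q hQ r hr
end

section
/- Let λ¹, λ² > 0 and ξ₁, ξ₂ > 0. Then the iterated contour integral (1/(2πi)²) ∫_{ψ₂ ∈ ℝ − iξ₂} ∫_{ψ₁ ∈ ℝ − iξ₁} e^{i(λ¹ψ₁ + λ²ψ₂)} / (ψ₁ ψ₂ (ψ₁ + ψ₂)) dψ₁ dψ₂ equals i·λ² if λ¹ > λ² and equals i·λ¹ if λ² > λ¹. -/
/-!
The residue computations are replaced by Fourier inversion. For `a`, `b` in the upper
half-plane, the kernels `1 / ((x - a) * (x - b))` and `1 / (x - a) ^ 2` are Fourier transforms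
of functions supported on `[0, ∞)` (one-sided exponentials `e^{2πiat}`, resp. `t e^{2πiat}`),
so `∫ e^{ilx} K(x) dx` is the value of that function at `l / 2π`: the sum of the residues in
the upper half-plane when `l > 0`, and `0` when `l < 0`.

Along `ψ₁ ∈ ℝ - iξ₁` the integrand has simple poles at `ψ₁ = 0` and `ψ₁ = -ψ₂`, and the
inner integral is `2πi (e^{iλ²ψ₂} - e^{i(λ²-λ¹)ψ₂}) / ψ₂²`. Each term has a double pole at
`ψ₂ = 0`, which contributes `-2πm` for the exponent `m`, but only when `m > 0`; so the second
term counts only when `λ² > λ¹`.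
-/

open MeasureTheory Set Filter Complex Topology
open scoped Real FourierTransform

lemma tendsto_cexp_mul_atTop {c : ℂ} (hc : c.re < 0) :
    Tendsto (fun t : ℝ => exp (c * t)) atTop (𝓝 0) := by
  simpa [Complex.tendsto_exp_nhds_zero_iff] using tendsto_const_nhds.neg_mul_atTop hc tendsto_id

lemma tendsto_ofReal_mul_cexp_mul_atTop {c : ℂ} (hc : c.re < 0) :
    Tendsto (fun t : ℝ => (t : ℂ) * exp (c * t)) atTop (𝓝 0) := by
  rw [tendsto_zero_iff_norm_tendsto_zero]
  refine (tendsto_rpow_mul_exp_neg_mul_atTop_nhds_zero 1 (-c.re) (by linarith)).congr' ?_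
  filter_upwards [eventually_ge_atTop 0] with t ht
  simp [Complex.norm_exp, abs_of_nonneg ht]

lemma integrableOn_ofReal_mul_cexp_mul_Ioi {c : ℂ} (hc : c.re < 0) :
    IntegrableOn (fun t : ℝ => (t : ℂ) * exp (c * t)) (Ioi 0) := by
  refine (integrable_norm_iff (by fun_prop)).mp ?_
  refine (integrableOn_rpow_mul_exp_neg_mul_rpow (s := 1) (p := 1) (b := -c.re) (by norm_num)
    one_pos (by linarith)).congr_fun (fun t ht => ?_) measurableSet_Ioi
  simp [Complex.norm_exp, abs_of_pos (mem_Ioi.mp ht)]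

lemma integral_ofReal_mul_cexp_mul_Ioi {c : ℂ} (hc : c.re < 0) :
    ∫ t in Ioi (0 : ℝ), (t : ℂ) * exp (c * t) = (c ^ 2)⁻¹ := by
  have hc0 : c ≠ 0 := by rintro rfl; simp at hc
  have hderiv : ∀ t ∈ Ici (0 : ℝ),
      HasDerivAt (fun t : ℝ => ((t : ℂ) / c - (c ^ 2)⁻¹) * exp (c * t))
        ((t : ℂ) * exp (c * t)) t := by
    intro t _
    have hid : HasDerivAt (fun t : ℝ => (t : ℂ)) 1 t := (hasDerivAt_id t).ofReal_comp
    refine (((hid.div_const c).sub_const _).mul (hid.const_mul c).cexp).congr_deriv ?_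
    field_simp
    ring
  have hlim : Tendsto (fun t : ℝ => ((t : ℂ) / c - (c ^ 2)⁻¹) * exp (c * t)) atTop (𝓝 0) := by
    simpa [sub_mul, div_mul_eq_mul_div] using
      ((tendsto_ofReal_mul_cexp_mul_atTop hc).div_const c).sub
        ((tendsto_cexp_mul_atTop hc).const_mul (c ^ 2)⁻¹)
  rw [integral_Ioi_of_hasDerivAt_of_tendsto' hderiv (integrableOn_ofReal_mul_cexp_mul_Ioi hc) hlim]
  simp

lemma norm_ofReal_sub_sq (x : ℝ) (a : ℂ) : ‖(x : ℂ) - a‖ ^ 2 = (x - a.re) ^ 2 + a.im ^ 2 := by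
  rw [Complex.sq_norm, Complex.normSq_apply]
  simp only [sub_re, ofReal_re, sub_im, ofReal_im, zero_sub, mul_neg, neg_mul, neg_neg]
  ring

lemma ofReal_sub_ne_zero {a : ℂ} (ha : a.im ≠ 0) (x : ℝ) : (x : ℂ) - a ≠ 0 := by
  intro h
  exact ha (by simpa using congrArg Complex.im h)

lemma integrable_inv_norm_ofReal_sub_sq {a : ℂ} (ha : a.im ≠ 0) :
    Integrable fun x : ℝ => (‖(x : ℂ) - a‖ ^ 2)⁻¹ := by
  have := ((integrable_inv_one_add_sq.comp_div ha).comp_sub_right a.re).const_mul (a.im ^ 2)⁻¹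
  refine this.congr (Eventually.of_forall fun x => ?_)
  simp only [norm_ofReal_sub_sq]
  field_simp
  ring

lemma integrable_inv_ofReal_sub_mul_ofReal_sub {a b : ℂ} (ha : a.im ≠ 0) (hb : b.im ≠ 0) :
    Integrable fun x : ℝ => (((x : ℂ) - a) * ((x : ℂ) - b))⁻¹ := by
  refine (((integrable_inv_norm_ofReal_sub_sq ha).add
    (integrable_inv_norm_ofReal_sub_sq hb)).const_mul 2⁻¹).mono' (by fun_prop)
    (Eventually.of_forall fun x => ?_)
  have := two_mul_le_add_sq ‖(x : ℂ) - a‖⁻¹ ‖(x : ℂ) - b‖⁻¹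
  simp only [Pi.add_apply, norm_inv, norm_mul, mul_inv, ← inv_pow] at this ⊢
  linarith

lemma fourier_indicator_Ici_comp_two_pi_mul (G : ℝ → ℂ) (x : ℝ) :
    𝓕 ((Ici 0).indicator fun t => G (2 * π * t)) x
      = (2 * π : ℂ)⁻¹ * ∫ s in Ioi (0 : ℝ), exp (-(I * x * s)) * G s := by
  have hsmul : (fun t : ℝ =>
        exp (↑(-2 * π * t * x) * I) • (Ici 0).indicator (fun t => G (2 * π * t)) t)
      = (Ici 0).indicator fun t => exp (-(I * x * ↑(2 * π * t))) * G (2 * π * t) := by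
    ext t
    by_cases ht : t ∈ Ici (0 : ℝ)
    · simp only [indicator_of_mem ht, smul_eq_mul]
      congr 2
      push_cast
      ring
    · simp [indicator_of_notMem ht]
  rw [Real.fourier_real_eq_integral_exp_smul, hsmul, integral_indicator measurableSet_Ici,
    integral_Ici_eq_integral_Ioi,
    integral_comp_mul_left_Ioi (fun s => exp (-(I * x * s)) * G s) 0 Real.two_pi_pos, mul_zero,
    Complex.real_smul]
  push_cast
  rfl

lemma continuousAt_indicator_Ici {M : Type*} [Zero M] [TopologicalSpace M] {g : ℝ → M} {v : ℝ}
    (hg : ContinuousAt g v) (hv : v ≠ 0) : ContinuousAt ((Ici 0).indicator g) v := by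
  rcases hv.lt_or_gt with hv | hv
  · refine continuousAt_const.congr (f := fun _ => 0) ?_
    filter_upwards [Iio_mem_nhds hv] with t ht
    exact (indicator_of_notMem (not_le.mpr ht) g).symm
  · refine hg.congr ?_
    filter_upwards [Ioi_mem_nhds hv] with t ht
    exact (indicator_of_mem (mem_Ici.mpr ht.le) g).symm

theorem integral_cexp_mul_eq_of_fourier_indicator_Ici {G F : ℝ → ℂ} (hG : Continuous G)
    (hGi : IntegrableOn G (Ioi 0)) (hF : 𝓕 ((Ici 0).indicator fun t => G (2 * π * t)) = F)
    (hFi : Integrable F) {l : ℝ} (hl : l ≠ 0) :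
    ∫ x : ℝ, exp (I * (l * x)) * F x = if 0 < l then G l else 0 := by
  have hφ : Integrable ((Ici 0).indicator fun t => G (2 * π * t)) := by
    rw [integrable_indicator_iff measurableSet_Ici, integrableOn_Ici_iff_integrableOn_Ioi,
      integrableOn_Ioi_comp_mul_left_iff G 0 Real.two_pi_pos, mul_zero]
    exact hGi
  have hv : l / (2 * π) ≠ 0 := div_ne_zero hl Real.two_pi_pos.ne'
  have hinv := hφ.fourierInv_fourier_eq (hF ▸ hFi)
    (continuousAt_indicator_Ici (by fun_prop) hv)
  rw [hF, Real.fourierInv_eq'] at hinv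
  simp only [RCLike.inner_apply, conj_trivial, smul_eq_mul] at hinv
  have hscale : 2 * π * (l / (2 * π)) = l := mul_div_cancel₀ l Real.two_pi_pos.ne'
  convert hinv using 1
  · simp_rw [← mul_assoc, hscale]
    push_cast
    ring_nf
  · rcases hl.lt_or_gt with hl | hl
    · rw [if_neg hl.not_gt, indicator_of_notMem]
      simpa using div_neg_of_neg_of_pos hl Real.two_pi_pos
    · rw [if_pos hl, indicator_of_mem (mem_Ici.mpr (div_pos hl Real.two_pi_pos).le), hscale]

lemma cexp_neg_mul_mul_cexp (a : ℂ) (x s : ℝ) :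
    exp (-(I * x * s)) * exp (I * a * s) = exp (I * (a - x) * s) := by
  rw [← Complex.exp_add]
  ring_nf

lemma re_I_mul_sub_ofReal (a : ℂ) (x : ℝ) : (I * (a - x)).re = -a.im := by
  simp

lemma fourier_indicator_Ici_two_poles {a b : ℂ} (ha : 0 < a.im) (hb : 0 < b.im) (hab : a ≠ b) :
    𝓕 ((Ici 0).indicator fun t =>
        2 * π * I / (a - b) * (exp (I * a * ↑(2 * π * t)) - exp (I * b * ↑(2 * π * t))))
      = fun x : ℝ => (((x : ℂ) - a) * ((x : ℂ) - b))⁻¹ := by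
  ext x
  have hca := re_I_mul_sub_ofReal a x ▸ neg_lt_zero.mpr ha
  have hcb := re_I_mul_sub_ofReal b x ▸ neg_lt_zero.mpr hb
  refine (fourier_indicator_Ici_comp_two_pi_mul
    (fun s => 2 * π * I / (a - b) * (exp (I * a * s) - exp (I * b * s))) x).trans ?_
  simp_rw [mul_left_comm (exp _), mul_sub (exp _), cexp_neg_mul_mul_cexp]
  rw [integral_const_mul, integral_sub (integrableOn_exp_mul_complex_Ioi hca 0)
    (integrableOn_exp_mul_complex_Ioi hcb 0), integral_exp_mul_complex_Ioi hca,
    integral_exp_mul_complex_Ioi hcb]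
  have hxa := ofReal_sub_ne_zero ha.ne' x
  have hxb := ofReal_sub_ne_zero hb.ne' x
  have hax := sub_ne_zero.mpr (sub_ne_zero.mp hxa).symm
  have hbx := sub_ne_zero.mpr (sub_ne_zero.mp hxb).symm
  have hab' := sub_ne_zero.mpr hab
  simp only [ofReal_zero, mul_zero, Complex.exp_zero]
  field_simp
  ring

lemma fourier_indicator_Ici_double_pole {a : ℂ} (ha : 0 < a.im) :
    𝓕 ((Ici 0).indicator fun t => -(2 * π) * (↑(2 * π * t) * exp (I * a * ↑(2 * π * t))))
      = fun x : ℝ => (((x : ℂ) - a) ^ 2)⁻¹ := by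
  ext x
  have hca := re_I_mul_sub_ofReal a x ▸ neg_lt_zero.mpr ha
  refine (fourier_indicator_Ici_comp_two_pi_mul
    (fun s => -(2 * π) * (s * exp (I * a * s))) x).trans ?_
  simp_rw [mul_left_comm (exp _), cexp_neg_mul_mul_cexp]
  rw [integral_const_mul, integral_ofReal_mul_cexp_mul_Ioi hca]
  have hxa := ofReal_sub_ne_zero ha.ne' x
  have hax := sub_ne_zero.mpr (sub_ne_zero.mp hxa).symm
  field_simp
  linear_combination (-(a - x) ^ 2) * I_sq

theorem integral_cexp_div_ofReal_sub_mul_ofReal_sub {a b : ℂ} (ha : 0 < a.im) (hb : 0 < b.im)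
    (hab : a ≠ b) {l : ℝ} (hl : 0 < l) :
    ∫ x : ℝ, exp (I * (l * x)) / ((x - a) * (x - b))
      = 2 * π * I / (a - b) * (exp (I * a * l) - exp (I * b * l)) := by
  simp_rw [div_eq_mul_inv]
  rw [integral_cexp_mul_eq_of_fourier_indicator_Ici (by fun_prop)
    (((integrableOn_exp_mul_complex_Ioi (by simpa using ha) 0).sub
      (integrableOn_exp_mul_complex_Ioi (by simpa using hb) 0)).const_mul _)
    (fourier_indicator_Ici_two_poles ha hb hab)
    (integrable_inv_ofReal_sub_mul_ofReal_sub ha.ne' hb.ne') hl.ne', if_pos hl, Pi.sub_apply,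
    div_eq_mul_inv]

theorem integral_cexp_div_ofReal_sub_sq {a : ℂ} (ha : 0 < a.im) {l : ℝ} (hl : l ≠ 0) :
    ∫ x : ℝ, exp (I * (l * x)) / (x - a) ^ 2
      = if 0 < l then -(2 * π) * (l * exp (I * a * l)) else 0 := by
  simp_rw [div_eq_mul_inv]
  exact integral_cexp_mul_eq_of_fourier_indicator_Ici (by fun_prop)
    ((integrableOn_ofReal_mul_cexp_mul_Ioi (by simpa using ha)).const_mul _)
    (fourier_indicator_Ici_double_pole ha)
    (by simpa only [sq] using integrable_inv_ofReal_sub_mul_ofReal_sub ha.ne' ha.ne') hl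

lemma cexp_I_mul_ofReal_mul_sub (l x : ℝ) (a : ℂ) :
    exp (I * (l * (x - a))) = exp (-(I * a * l)) * exp (I * (l * x)) := by
  rw [← Complex.exp_add]
  ring_nf

theorem integral_cexp_div_shifted_two_poles {a z : ℂ} (ha : 0 < a.im) (hz : z.im < a.im)
    (hz0 : z ≠ 0) {l : ℝ} (hl : 0 < l) :
    ∫ x : ℝ, exp (I * (l * (x - a))) / ((x - a) * (x - a + z))
      = 2 * π * I * (1 - exp (-(I * (l * z)))) / z := by
  have hb : 0 < (a - z).im := by simpa using hz
  have hab : a ≠ a - z := by simpa [eq_sub_iff_add_eq] using hz0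
  have hshift (x : ℝ) : (x : ℂ) - a + z = x - (a - z) := by ring
  simp_rw [cexp_I_mul_ofReal_mul_sub, mul_div_assoc, hshift]
  rw [integral_const_mul, integral_cexp_div_ofReal_sub_mul_ofReal_sub ha hb hab hl, sub_sub_cancel]
  have h1 : exp (-(I * a * l)) * exp (I * a * l) = 1 := by
    rw [← Complex.exp_add, neg_add_cancel, Complex.exp_zero]
  have h2 : exp (-(I * a * l)) * exp (I * (a - z) * l) = exp (-(I * (l * z))) := by
    rw [← Complex.exp_add]
    ring_nf
  linear_combination (2 * π * I / z) * (h1 - h2)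

theorem integral_cexp_div_shifted_sq {a : ℂ} (ha : 0 < a.im) {m : ℝ} (hm : m ≠ 0) :
    ∫ x : ℝ, exp (I * (m * (x - a))) / (x - a) ^ 2
      = if 0 < m then -(2 * π * (m : ℂ)) else 0 := by
  simp_rw [cexp_I_mul_ofReal_mul_sub, mul_div_assoc]
  rw [integral_const_mul, integral_cexp_div_ofReal_sub_sq ha hm]
  split_ifs
  · rw [mul_left_comm, mul_left_comm _ (m : ℂ), ← Complex.exp_add, neg_add_cancel,
      Complex.exp_zero]
    ring
  · rw [mul_zero]

lemma integrable_cexp_div_shifted_sq {a : ℂ} (ha : a.im ≠ 0) (m : ℝ) :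
    Integrable fun x : ℝ => exp (I * (m * (x - a))) / (x - a) ^ 2 := by
  simp_rw [div_eq_mul_inv, sq]
  refine (integrable_inv_ofReal_sub_mul_ofReal_sub ha ha).bdd_mul (c := Real.exp (m * a.im))
    (by fun_prop) (ae_of_all _ fun x => ?_)
  simp [Complex.norm_exp]

theorem integral_inner_contour {l1 ξ1 : ℝ} (hl1 : 0 < l1) (hξ1 : 0 < ξ1) (l2 : ℝ) {z : ℂ}
    (hz : z.im < 0) :
    ∫ ψ1 : ℝ, exp (I * (l1 * ((ψ1 : ℂ) - ξ1 * I) + l2 * z)) /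
        (((ψ1 : ℂ) - ξ1 * I) * z * (((ψ1 : ℂ) - ξ1 * I) + z))
      = 2 * π * I * (exp (I * (l2 * z)) / z ^ 2 - exp (I * ((l2 - l1 : ℝ) * z)) / z ^ 2) := by
  have hz0 : z ≠ 0 := by rintro rfl; simp at hz
  have hfactor (ψ1 : ℝ) : exp (I * (l1 * ((ψ1 : ℂ) - ξ1 * I) + l2 * z)) /
        (((ψ1 : ℂ) - ξ1 * I) * z * (((ψ1 : ℂ) - ξ1 * I) + z))
      = exp (I * (l2 * z)) / z * (exp (I * (l1 * ((ψ1 : ℂ) - ξ1 * I))) /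
          (((ψ1 : ℂ) - ξ1 * I) * ((ψ1 : ℂ) - ξ1 * I + z))) := by
    rw [mul_add, Complex.exp_add, div_mul_div_comm]
    ring
  simp_rw [hfactor]
  rw [integral_const_mul, integral_cexp_div_shifted_two_poles (by simpa using hξ1)
    (by simpa using hz.trans hξ1) hz0 hl1]
  have hexp : exp (I * ((l2 - l1 : ℝ) * z)) = exp (I * (l2 * z)) * exp (-(I * (l1 * z))) := by
    rw [← Complex.exp_add]
    push_cast
    ring_nf
  rw [hexp]
  field_simp

theorem double_contour_integral_example (l1 l2 ξ1 ξ2 : ℝ)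
    (hl1 : 0 < l1) (hl2 : 0 < l2) (hξ1 : 0 < ξ1) (hξ2 : 0 < ξ2) :
    (l2 < l1 →
      (1 / (2 * Real.pi * Complex.I)) ^ 2 *
        ∫ ψ2 : ℝ, ∫ ψ1 : ℝ,
          Complex.exp (Complex.I * (l1 * ((ψ1 : ℂ) - (ξ1 : ℂ) * Complex.I) +
              l2 * ((ψ2 : ℂ) - (ξ2 : ℂ) * Complex.I))) /
            (((ψ1 : ℂ) - (ξ1 : ℂ) * Complex.I) * ((ψ2 : ℂ) - (ξ2 : ℂ) * Complex.I) *
              (((ψ1 : ℂ) - (ξ1 : ℂ) * Complex.I) + ((ψ2 : ℂ) - (ξ2 : ℂ) * Complex.I)))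
        = Complex.I * l2) ∧
    (l1 < l2 →
      (1 / (2 * Real.pi * Complex.I)) ^ 2 *
        ∫ ψ2 : ℝ, ∫ ψ1 : ℝ,
          Complex.exp (Complex.I * (l1 * ((ψ1 : ℂ) - (ξ1 : ℂ) * Complex.I) +
              l2 * ((ψ2 : ℂ) - (ξ2 : ℂ) * Complex.I))) /
            (((ψ1 : ℂ) - (ξ1 : ℂ) * Complex.I) * ((ψ2 : ℂ) - (ξ2 : ℂ) * Complex.I) *
              (((ψ1 : ℂ) - (ξ1 : ℂ) * Complex.I) + ((ψ2 : ℂ) - (ξ2 : ℂ) * Complex.I)))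
        = Complex.I * l1) := by
  have ha2 : 0 < ((ξ2 : ℂ) * I).im := by simpa using hξ2
  have him (ψ2 : ℝ) : ((ψ2 : ℂ) - ξ2 * I).im < 0 := by simpa using hξ2
  simp only [integral_inner_contour hl1 hξ1 l2, him]
  rw [integral_const_mul, integral_sub (integrable_cexp_div_shifted_sq ha2.ne' l2)
    (integrable_cexp_div_shifted_sq ha2.ne' (l2 - l1)), integral_cexp_div_shifted_sq ha2 hl2.ne',
    if_pos hl2]
  constructor <;> intro hlt
  · rw [integral_cexp_div_shifted_sq ha2 (sub_ne_zero.mpr hlt.ne), if_neg (by linarith)]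
    field_simp
    linear_combination (-2 * π * l2) * I_sq
  · rw [integral_cexp_div_shifted_sq ha2 (sub_ne_zero.mpr hlt.ne'), if_pos (by linarith)]
    field_simp
    push_cast
    linear_combination (-l1 : ℂ) * I_sq
end
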